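/- Let p ≥ 1 be an integer and let a_1,…,a_p be arbitrary reals. Then for every (β, β₀) ∈ ℝ^p × ℝ, G(β, β₀) ≥ p + 100p². -/

import Mathlib

/-!
Only the `θ`-terms and the last term matter. Put `m = max{0, β₀}`. If `m ≥ 1`, the last term
alone is at least `(1 + 10p)² ≥ p + 100p²`. If `m ≤ 1`, one of `±β_j + β₀` is at most `β₀`, so its
positive part lies in `[0, m]` and `θ(β_j, β₀) ≥ (1 - m)²`; then
`p(1 - m)² + (m + 10p)² = p + 100p² + (p + 1)m² + 18pm`.
-/

/-- `θ(x, β₀) = (max{0, x + β₀} − 1)² + (max{0, −x + β₀} − 1)²`. -/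
noncomputable def thetaFn (x β₀ : ℝ) : ℝ :=
  (max 0 (x + β₀) - 1) ^ 2 + (max 0 (-x + β₀) - 1) ^ 2

/-- The objective of the (ReLU) reduction instance. -/
noncomputable def reluObj {p : ℕ} (a : Fin p → ℝ) (β : Fin p → ℝ) (β₀ : ℝ) : ℝ :=
  (max 0 (∑ i, a i * β i + β₀) - (1 / 2) * ∑ i, a i) ^ 2
  + (max 0 (2 * ∑ i, a i * β i + β₀) - ∑ i, a i) ^ 2
  + ∑ j, thetaFn (β j) β₀
  + (max 0 β₀ + 10 * p) ^ 2

lemma thetaFn_nonneg (x β₀ : ℝ) : 0 ≤ thetaFn x β₀ := by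
  unfold thetaFn; positivity

lemma one_sub_max_sq_le_thetaFn (x : ℝ) {β₀ : ℝ} (h : max 0 β₀ ≤ 1) :
    (1 - max 0 β₀) ^ 2 ≤ thetaFn x β₀ := by
  have relu_term_ge : ∀ t ≤ β₀, (1 - max 0 β₀) ^ 2 ≤ (max 0 t - 1) ^ 2 := fun t ht => by
    have : max 0 t ≤ max 0 β₀ := max_le_max_left 0 ht
    nlinarith [le_max_left 0 t]
  unfold thetaFn
  rcases le_total x 0 with hx | hx
  · nlinarith [relu_term_ge (x + β₀) (by linarith), sq_nonneg (max 0 (-x + β₀) - 1)]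
  · nlinarith [relu_term_ge (-x + β₀) (by linarith), sq_nonneg (max 0 (x + β₀) - 1)]

lemma card_mul_le_sum_thetaFn {p : ℕ} (β : Fin p → ℝ) {β₀ : ℝ} (h : max 0 β₀ ≤ 1) :
    p * (1 - max 0 β₀) ^ 2 ≤ ∑ j, thetaFn (β j) β₀ := by
  simpa using Finset.card_nsmul_le_sum Finset.univ (fun j => thetaFn (β j) β₀) _
    fun j _ => one_sub_max_sq_le_thetaFn (β j) h

lemma sum_thetaFn_add_le_reluObj {p : ℕ} (a β : Fin p → ℝ) (β₀ : ℝ) :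
    ∑ j, thetaFn (β j) β₀ + (max 0 β₀ + 10 * p) ^ 2 ≤ reluObj a β β₀ := by
  unfold reluObj
  nlinarith [sq_nonneg (max 0 (∑ i, a i * β i + β₀) - (1 / 2) * ∑ i, a i),
    sq_nonneg (max 0 (2 * ∑ i, a i * β i + β₀) - ∑ i, a i)]

theorem reluObj_ge_general (p : ℕ) (a : Fin p → ℝ)
    (β : Fin p → ℝ) (β₀ : ℝ) :
    reluObj a β β₀ ≥ (p : ℝ) + 100 * (p : ℝ) ^ 2 := by
  have hG := sum_thetaFn_add_le_reluObj a β β₀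
  have hm : 0 ≤ max 0 β₀ := le_max_left 0 β₀
  have hp : (0 : ℝ) ≤ p := p.cast_nonneg
  rcases le_total (max 0 β₀) 1 with h | h
  · have hθ := card_mul_le_sum_thetaFn β h
    nlinarith [mul_nonneg hp hm, mul_nonneg hp (sq_nonneg (max 0 β₀))]
  · have hθ : 0 ≤ ∑ j, thetaFn (β j) β₀ := Finset.sum_nonneg fun j _ => thetaFn_nonneg _ _
    nlinarith

/-- for `p ≥ 1` and arbitrary reals `a₁,…,a_p`, every `(β, β₀)` satisfies
`G(β, β₀) ≥ p + 100 p²`. -/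
theorem reluObj_ge (p : ℕ) (hp : 1 ≤ p) (a : Fin p → ℝ)
    (β : Fin p → ℝ) (β₀ : ℝ) :
    reluObj a β β₀ ≥ (p : ℝ) + 100 * (p : ℝ) ^ 2 :=
  reluObj_ge_general p a β β₀
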